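/- Let M^n be a biharmonic hypersurface in the unit sphere S^{n+1} ⊂ R^{n+2}, and let x_i = ⟨X, E_i⟩|_M be the restricted coordinate functions. If there exists a function φ on M such that ΔΔx_i = φ x_i for all 1 ≤ i ≤ n+2, then M is minimal (H ≡ 0). -/
import Mathlib


open RealInnerProductSpace

/-- let `M^n` be a biharmonic hypersurface of the unit sphere
`S^{n+1} ⊂ ℝ^{n+2}` and `x_i = ⟨X, E_i⟩|_M` the restricted coordinate functions.
If there is a function `φ` on `M` with `ΔΔx_i = φ x_i` for all `1 ≤ i ≤ n+2`, then `M`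
is minimal, i.e. `H ≡ 0`.
Here `ι` is the inclusion of `M` into the sphere (position vector, so `x_i p = ι p i`),
`N` the unit normal of `M` in `S^{n+1}` (tangent to the sphere: `⟨N, X⟩ = 0`), `H` the
unnormalized mean curvature, and biharmonicity is used via its characterization
`ΔΔx_i = (n² + H²) x_i - 2nH⟨N, E_i⟩` for all `i`. -/
theorem biharmonic_with_proportional_bilaplacian_is_minimal {M : Type*} {n : ℕ}
    (hn : 1 ≤ n)
    (ι : M → EuclideanSpace ℝ (Fin (n + 2)))
    (hι : ∀ p, ι p ∈ Metric.sphere (0 : EuclideanSpace ℝ (Fin (n + 2))) 1)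
    (N : M → EuclideanSpace ℝ (Fin (n + 2)))
    (hN : ∀ p, ‖N p‖ = 1)
    (hNtangent : ∀ p, ⟪N p, ι p⟫ = 0)
    (H φ : M → ℝ)
    (LLx : Fin (n + 2) → M → ℝ)
    (hbiharmonic : ∀ i p, LLx i p = ((n : ℝ) ^ 2 + H p ^ 2) * ι p i
      - 2 * n * H p * N p i)
    (hφ : ∀ i p, LLx i p = φ p * ι p i) :
    ∀ p, H p = 0 := by
  intro p
  set c : ℝ := (n : ℝ) ^ 2 + H p ^ 2 - φ p with hc
  set d : ℝ := 2 * n * H p with hd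
  have hvec : c • ι p = d • N p := by
    ext i
    have h1 := hbiharmonic i p
    have h2 := hφ i p
    simp only [PiLp.smul_apply, smul_eq_mul]
    rw [h2] at h1
    ring_nf
    ring_nf at h1
    linarith
  have hinner : ⟪N p, c • ι p⟫ = ⟪N p, d • N p⟫ := by rw [hvec]
  rw [real_inner_smul_right, real_inner_smul_right, hNtangent p,
    real_inner_self_eq_norm_sq, hN p] at hinner
  have hd0 : d = 0 := by simpa using hinner.symm
  have hnpos : (0 : ℝ) < n := by exact_mod_cast hn
  rw [hd] at hd0
  nlinarith
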